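/- The lattice of systems on a finite lattice P is upper semimodular: if f·g is covered by both f and g, then f + g covers both f and g. -/

import Mathlib

/-!
A system is determined by its fixed points, and `f ≤ g` iff `Fix g ⊆ Fix f`; the join `f + g` has
fixed points `Fix f ∩ Fix g`. If `m ⋖ f` and `x, y` are fixed by `m` but not by `f`, the system
equal to `m` below `x` and to `f` elsewhere lies between `m` and `f` and fixes `x`, so it is `m`;
as `f` does not fix `y`, this forces `y ≤ x`. Hence covers of systems are exactly the covers
`Fix f ⋖ Fix m` of fixed-point sets. The two covers below `f · g` then give
`Fix (f · g) = Fix f ∪ Fix g`, and the theorem follows from lower semimodularity of `Set P`.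
-/

def IsSystem {P : Type*} [Lattice P] (f : P → P) : Prop :=
  (∀ a, a ≤ f a) ∧ Monotone f ∧ ∀ a, f (f a) = f a

def sysMeet {P : Type*} [Lattice P] (f g : P → P) : P → P := fun a => f a ⊓ g a

def sysJoin {P : Type*} [Lattice P] [Fintype P] (f g : P → P) : P → P :=
  (f ∘ g)^[Fintype.card P]

/-- `g` covers `f` in the lattice of systems. -/
def SysCovBy {P : Type*} [Lattice P] (f g : P → P) : Prop :=
  (∀ a, f a ≤ g a) ∧ f ≠ g ∧
    ∀ h : P → P, IsSystem h → (∀ a, f a ≤ h a) → (∀ a, h a ≤ g a) →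
      h = f ∨ h = g

open Function

section Systems

variable {P : Type*}

theorem isFixedPt_iterate_card_of_le_apply [PartialOrder P] [Fintype P] {F : P → P}
    (hF : ∀ x, x ≤ F x) (a : P) : IsFixedPt F (F^[Fintype.card P] a) := by
  set N := Fintype.card P
  by_contra hN
  have hstep : ∀ k < N, F^[k] a < F^[k + 1] a := by
    intro k hk
    refine (iterate_succ_apply' F k a ▸ hF _).lt_of_ne fun heq => hN ?_
    have hfix : IsFixedPt F (F^[k] a) := by
      rw [IsFixedPt, ← iterate_succ_apply' F k a]
      exact heq.symm
    rwa [← Nat.sub_add_cancel hk.le, iterate_add_apply, iterate_fixed hfix]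
  have hmono : StrictMono fun i : Fin (N + 1) => F^[i] a :=
    Fin.strictMono_iff_lt_succ.2 fun i => hstep i i.isLt
  have hcard := Fintype.card_le_of_injective _ hmono.injective
  rw [Fintype.card_fin] at hcard
  omega

section Lattice

variable [Lattice P] {f g m : P → P}

namespace IsSystem

theorem le_apply (hf : IsSystem f) (a : P) : a ≤ f a := hf.1 a

theorem monotone (hf : IsSystem f) : Monotone f := hf.2.1

theorem isFixedPt_apply (hf : IsSystem f) (a : P) : IsFixedPt f (f a) := hf.2.2 a

theorem le_iff_fixedPoints_subset (hf : IsSystem f) (hg : IsSystem g) :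
    (∀ a, f a ≤ g a) ↔ fixedPoints g ⊆ fixedPoints f := by
  refine ⟨fun h a ha => le_antisymm ((h a).trans_eq ha) (hf.le_apply a), fun h a => ?_⟩
  calc f a ≤ f (g a) := hf.monotone (hg.le_apply a)
    _ = g a := h (hg.isFixedPt_apply a)

theorem eq_iff_fixedPoints_eq (hf : IsSystem f) (hg : IsSystem g) :
    f = g ↔ fixedPoints f = fixedPoints g := by
  refine ⟨congrArg fixedPoints, fun h => funext fun a => le_antisymm ?_ ?_⟩
  · exact (hf.le_iff_fixedPoints_subset hg).2 h.ge a
  · exact (hg.le_iff_fixedPoints_subset hf).2 h.le a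

theorem ite_le (hm : IsSystem m) (hf : IsSystem f) (hmf : ∀ a, m a ≤ f a) {x : P}
    (hx : IsFixedPt m x) [DecidablePred (· ≤ x)] :
    IsSystem fun a => if a ≤ x then m a else f a := by
  have hm_le : ∀ {a}, a ≤ x → m a ≤ x := fun ha => (hm.monotone ha).trans_eq hx
  refine ⟨fun a => ?_, fun a b hab => ?_, fun a => ?_⟩ <;> dsimp only
  · split_ifs
    exacts [hm.le_apply a, hf.le_apply a]
  · by_cases hb : b ≤ x
    · simp only [hab.trans hb, hb, if_true]
      exact hm.monotone hab
    · by_cases ha : a ≤ x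
      · simp only [ha, hb, if_true, if_false]
        exact (hm.monotone hab).trans (hmf b)
      · simp only [ha, hb, if_false]
        exact hf.monotone hab
  · by_cases ha : a ≤ x
    · simp only [ha, hm_le ha, if_true]
      exact hm.isFixedPt_apply a
    · have hfix : IsFixedPt m (f a) :=
        le_antisymm ((hmf _).trans_eq (hf.isFixedPt_apply a)) (hm.le_apply _)
      split_ifs
      exacts [hfix, hf.isFixedPt_apply a]

end IsSystem

theorem isSystem_sysMeet (hf : IsSystem f) (hg : IsSystem g) : IsSystem (sysMeet f g) := by
  refine ⟨fun a => le_inf (hf.le_apply a) (hg.le_apply a),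
    fun a b hab => inf_le_inf (hf.monotone hab) (hg.monotone hab), fun a => ?_⟩
  refine le_antisymm (inf_le_inf ?_ ?_) (le_inf (hf.le_apply _) (hg.le_apply _))
  · exact (hf.monotone inf_le_left).trans_eq (hf.isFixedPt_apply a)
  · exact (hg.monotone inf_le_right).trans_eq (hg.isFixedPt_apply a)

theorem sysMeet_eq_left (h : ∀ a, f a ≤ g a) : sysMeet f g = f :=
  funext fun a => inf_eq_left.2 (h a)

section Fintype

variable [Fintype P]

theorem isFixedPt_sysJoin (hf : IsSystem f) (hg : IsSystem g) (a : P) :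
    IsFixedPt f (sysJoin f g a) ∧ IsFixedPt g (sysJoin f g a) := by
  have hfix : IsFixedPt (f ∘ g) (sysJoin f g a) :=
    isFixedPt_iterate_card_of_le_apply (fun x => (hg.le_apply x).trans (hf.le_apply _)) a
  have hgfix : IsFixedPt g (sysJoin f g a) :=
    le_antisymm ((hf.le_apply _).trans_eq hfix) (hg.le_apply _)
  rw [IsFixedPt, comp_apply, hgfix.eq] at hfix
  exact ⟨hfix, hgfix⟩

theorem isSystem_sysJoin (hf : IsSystem f) (hg : IsSystem g) : IsSystem (sysJoin f g) := by
  have hfg : Monotone (f ∘ g) := hf.monotone.comp hg.monotone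
  refine ⟨fun a => ?_, hfg.iterate _, fun a => ?_⟩
  · exact id_le_iterate_of_id_le (fun x => (hg.le_apply x).trans (hf.le_apply _)) _ a
  · obtain ⟨hfa, hga⟩ := isFixedPt_sysJoin hf hg a
    exact iterate_fixed (hfa.comp hga) _

theorem fixedPoints_sysJoin (hf : IsSystem f) (hg : IsSystem g) :
    fixedPoints (sysJoin f g) = fixedPoints f ∩ fixedPoints g := by
  ext a
  refine ⟨fun ha => ha ▸ isFixedPt_sysJoin hf hg a, fun ⟨hfa, hga⟩ => ?_⟩
  exact iterate_fixed (hfa.comp hga) _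

end Fintype

theorem SysCovBy.le_of_mem_fixedPoints_diff (hm : IsSystem m) (hf : IsSystem f)
    (hc : SysCovBy m f) {x y : P} (hx : x ∈ fixedPoints m \ fixedPoints f)
    (hy : y ∈ fixedPoints m \ fixedPoints f) : y ≤ x := by
  classical
  set h : P → P := fun a => if a ≤ x then m a else f a
  have hmh : ∀ a, m a ≤ h a := fun a => by
    by_cases ha : a ≤ x <;> simp only [h, ha, if_true, if_false, le_refl, hc.1 a]
  have hhf : ∀ a, h a ≤ f a := fun a => by
    by_cases ha : a ≤ x <;> simp only [h, ha, if_true, if_false, le_refl, hc.1 a]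
  rcases hc.2.2 h (hm.ite_le hf hc.1 hx.1) hmh hhf with h_eq_m | h_eq_f
  · by_contra hyx
    have : h y = f y := if_neg hyx
    exact hy.2 (this.symm.trans ((congrFun h_eq_m y).trans hy.1))
  · have : h x = m x := if_pos le_rfl
    exact absurd ((congrFun h_eq_f x).symm.trans (this.trans hx.1)) hx.2

theorem sysCovBy_iff_covBy_fixedPoints (hm : IsSystem m) (hf : IsSystem f) :
    SysCovBy m f ↔ fixedPoints f ⋖ fixedPoints m := by
  constructor
  · intro hc
    have hsub : fixedPoints f ⊆ fixedPoints m := (hm.le_iff_fixedPoints_subset hf).1 hc.1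
    have hne : fixedPoints f ≠ fixedPoints m := fun h =>
      hc.2.1 ((hm.eq_iff_fixedPoints_eq hf).2 h.symm)
    obtain ⟨x, hxm, hxf⟩ := Set.exists_of_ssubset (hsub.ssubset_of_ne hne)
    refine Set.covBy_iff_exists_insert.2 ⟨x, hxf, Set.Subset.antisymm
      (Set.insert_subset hxm hsub) fun y hym => ?_⟩
    by_cases hyf : y ∈ fixedPoints f
    · exact Or.inr hyf
    · exact Or.inl (le_antisymm (hc.le_of_mem_fixedPoints_diff hm hf ⟨hxm, hxf⟩ ⟨hym, hyf⟩)
        (hc.le_of_mem_fixedPoints_diff hm hf ⟨hym, hyf⟩ ⟨hxm, hxf⟩))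
  · intro hc
    refine ⟨(hm.le_iff_fixedPoints_subset hf).2 hc.le,
      fun h => hc.ne (congrArg fixedPoints h).symm, fun h hh hmh hhf => ?_⟩
    rw [hh.eq_iff_fixedPoints_eq hm, hh.eq_iff_fixedPoints_eq hf, or_comm]
    exact hc.eq_or_eq ((hh.le_iff_fixedPoints_subset hf).1 hhf)
      ((hm.le_iff_fixedPoints_subset hh).1 hmh)

end Lattice

end Systems

theorem stmt12 {P : Type*} [Lattice P] [Fintype P] {f g : P → P}
    (hf : IsSystem f) (hg : IsSystem g)
    (h1 : SysCovBy (sysMeet f g) f) (h2 : SysCovBy (sysMeet f g) g) :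
    SysCovBy f (sysJoin f g) ∧ SysCovBy g (sysJoin f g) := by
  have hm := isSystem_sysMeet hf hg
  have hj := isSystem_sysJoin hf hg
  rw [sysCovBy_iff_covBy_fixedPoints hm hf] at h1
  rw [sysCovBy_iff_covBy_fixedPoints hm hg] at h2
  rw [sysCovBy_iff_covBy_fixedPoints hf hj, sysCovBy_iff_covBy_fixedPoints hg hj,
    fixedPoints_sysJoin hf hg]
  have hgf : ¬ fixedPoints g ⊆ fixedPoints f := fun hgf => by
    rw [sysMeet_eq_left ((hf.le_iff_fixedPoints_subset hg).2 hgf)] at h1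
    exact h1.lt.ne rfl
  have hsup : fixedPoints f ⊔ fixedPoints g = fixedPoints (sysMeet f g) :=
    (h1.eq_or_eq le_sup_left (sup_le h1.le h2.le)).resolve_left fun h => hgf (sup_eq_left.1 h)
  rw [← hsup] at h1 h2
  exact ⟨inf_covBy_of_covBy_sup_right h2, inf_covBy_of_covBy_sup_left h1⟩
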